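/- arXiv:0710.5908 — 4 statements merged into one kernel-verified Lean document; each statement's English description precedes it below -/
import Mathlib

section
/- Let H be a complex Hilbert space, M ≥ 1 an integer, and let L_1,…,L_M and R_1,…,R_M be bounded operators on H such that R_j R_k = R_k R_j for all j,k and L_k R_n = R_n L_k whenever n ≠ k. Given real numbers τ_1,…,τ_M, set L̃_k = L_k + Σ_{n=1, n≠k}^{M} R_n. Then for every 1 ≤ m ≤ M one has the factorization e^{−iτ_m L̃_m} ⋯ e^{−iτ_2 L̃_2} e^{−iτ_1 L̃_1} = U_m^− · e^{−iτ_m L_m} ⋯ e^{−iτ_1 L_1} · U_m^+, where U_m^− = exp(−i Σ_{j=1}^{m} Σ_{k=1}^{j−1} τ_j R_k) and U_m^+ = exp(−i Σ_{j=1}^{m} Σ_{k=j+1}^{M} τ_j R_k). Moreover, if ψ ∈ H satisfies R_k ψ = 0 for all k, then U_m^− ψ = ψ and U_m^+ ψ = ψ. -/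
open scoped BigOperators

/-- Ordered product `f m * f (m-1) * ⋯ * f 1` of elements of a monoid. -/
def ordProd {A : Type*} [Monoid A] (f : ℕ → A) : ℕ → A
  | 0 => 1
  | m + 1 => f (m + 1) * ordProd f m

/-!
Write `τ_k L̃_k = A_k + τ_k L_k + B_k` with `A_k = τ_k ∑_{n<k} R_n` and `B_k = τ_k ∑_{n>k} R_n`.
The three pieces commute, so the `k`-th step propagator factors as
`e^{-iA_k} e^{-iτ_k L_k} e^{-iB_k}`. In the ordered product, `e^{-iB_k}` involves only `R_n` with
`n > k` and so commutes with every earlier factor, while `e^{-iτ_k L_k}` commutes with the earlier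
`e^{-iA_j}`, which involve only `R_n` with `n < j < k`. Sorting the factors and merging the mutually
commuting `A`'s and `B`'s into single exponentials gives `U_m^-` and `U_m^+`. A vector killed by
every `R_k` is killed by their exponents, hence fixed by their exponentials.
-/

open Finset NormedSpace

section Monoid

variable {A : Type*} [Monoid A]

theorem ordProd_congr {f g : ℕ → A} {m : ℕ} (h : ∀ k, 1 ≤ k → k ≤ m → f k = g k) :
    ordProd f m = ordProd g m := by
  induction m with
  | zero => rfl
  | succ m ih =>
    rw [ordProd, ordProd, h (m + 1) (by omega) le_rfl, ih fun k h₁ h₂ => h k h₁ (by omega)]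

theorem commute_ordProd_right {x : A} {f : ℕ → A} {m : ℕ}
    (h : ∀ k, 1 ≤ k → k ≤ m → Commute x (f k)) : Commute x (ordProd f m) := by
  induction m with
  | zero => exact Commute.one_right x
  | succ m ih =>
    exact (h (m + 1) (by omega) le_rfl).mul_right (ih fun k h₁ h₂ => h k h₁ (by omega))

theorem ordProd_mul {f g : ℕ → A} {m : ℕ}
    (h : ∀ j k, 1 ≤ j → j < k → k ≤ m → Commute (g k) (f j)) :
    ordProd (fun k => f k * g k) m = ordProd f m * ordProd g m := by
  induction m with
  | zero => simp [ordProd]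
  | succ m ih =>
    have hg : Commute (g (m + 1)) (ordProd f m) :=
      commute_ordProd_right fun j h₁ h₂ => h j (m + 1) h₁ (by omega) le_rfl
    rw [ordProd, ordProd, ordProd, ih fun j k h₁ h₂ h₃ => h j k h₁ h₂ (by omega)]
    simp only [mul_assoc, hg.left_comm]

end Monoid

theorem sum_Icc_erase_eq_sum_Ico_add_sum_Icc {β : Type*} [AddCommMonoid β] (f : ℕ → β)
    {k M : ℕ} (hk : k ≤ M) :
    ∑ n ∈ (Icc 1 M).erase k, f n = ∑ n ∈ Ico 1 k, f n + ∑ n ∈ Icc (k + 1) M, f n := by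
  rw [← sum_union <| disjoint_left.mpr fun n h₁ h₂ => by
    simp only [mem_Ico, mem_Icc] at h₁ h₂; omega]
  congr 1
  ext n
  simp only [mem_erase, mem_Icc, mem_union, mem_Ico]
  omega

section BanachAlgebra

variable {𝔸 : Type*} [NormedRing 𝔸] [NormedAlgebra ℚ 𝔸] [CompleteSpace 𝔸]

theorem exp_sum_Icc_eq_ordProd (f : ℕ → 𝔸) {m : ℕ}
    (h : ∀ j k, 1 ≤ j → j < k → k ≤ m → Commute (f k) (f j)) :
    exp (∑ j ∈ Icc 1 m, f j) = ordProd (fun j => exp (f j)) m := by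
  induction m with
  | zero => simp [ordProd]
  | succ m ih =>
    have hf : Commute (f (m + 1)) (∑ j ∈ Icc 1 m, f j) :=
      Commute.sum_right _ _ _ fun j hj =>
        h j (m + 1) (mem_Icc.mp hj).1 (Nat.lt_succ_of_le (mem_Icc.mp hj).2) le_rfl
    rw [sum_Icc_succ_top (by omega), add_comm, exp_add_of_commute hf, ordProd,
      ih fun j k h₁ h₂ h₃ => h j k h₁ h₂ (by omega)]

theorem exp_add_sum_Icc_erase {M k : ℕ} (hk : k ≤ M) (x : 𝔸) (r : ℕ → 𝔸)
    (hrr : ∀ i ∈ Icc 1 M, ∀ j ∈ Icc 1 M, Commute (r i) (r j))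
    (hxr : ∀ n ∈ Icc 1 M, n ≠ k → Commute x (r n)) :
    exp (x + ∑ n ∈ (Icc 1 M).erase k, r n)
      = exp (∑ n ∈ Ico 1 k, r n) * exp x * exp (∑ n ∈ Icc (k + 1) M, r n) := by
  have hlow : ∀ n ∈ Ico 1 k, n ∈ Icc 1 M ∧ n ≠ k := fun n hn => by
    simp only [mem_Ico, mem_Icc] at hn ⊢; omega
  have hhigh : ∀ n ∈ Icc (k + 1) M, n ∈ Icc 1 M ∧ n ≠ k := fun n hn => by
    simp only [mem_Icc] at hn ⊢; omega
  have hax : Commute (∑ n ∈ Ico 1 k, r n) x :=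
    Commute.sum_left _ _ _ fun n hn => (hxr n (hlow n hn).1 (hlow n hn).2).symm
  have haxb : Commute (∑ n ∈ Ico 1 k, r n + x) (∑ n ∈ Icc (k + 1) M, r n) := by
    refine Commute.add_left (Commute.sum_left _ _ _ fun i hi => ?_) ?_
    · exact Commute.sum_right _ _ _ fun j hj => hrr i (hlow i hi).1 j (hhigh j hj).1
    · exact Commute.sum_right _ _ _ fun n hn => hxr n (hhigh n hn).1 (hhigh n hn).2
  rw [sum_Icc_erase_eq_sum_Ico_add_sum_Icc r hk, ← exp_add_of_commute hax,
    ← exp_add_of_commute haxb]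
  abel_nf

theorem ordProd_exp_add_sum_Icc_erase {M m : ℕ} (hm : m ≤ M) (l : ℕ → 𝔸) (r : ℕ → ℕ → 𝔸)
    (hrr : ∀ i j, ∀ k ∈ Icc 1 M, ∀ n ∈ Icc 1 M, Commute (r i k) (r j n))
    (hlr : ∀ k ∈ Icc 1 M, ∀ j, ∀ n ∈ Icc 1 M, n ≠ k → Commute (l k) (r j n)) :
    ordProd (fun k => exp (l k + ∑ n ∈ (Icc 1 M).erase k, r k n)) m
      = exp (∑ j ∈ Icc 1 m, ∑ k ∈ Ico 1 j, r j k) * ordProd (fun k => exp (l k)) m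
        * exp (∑ j ∈ Icc 1 m, ∑ k ∈ Icc (j + 1) M, r j k) := by
  set a := fun k => ∑ n ∈ Ico 1 k, r k n
  set b := fun k => ∑ n ∈ Icc (k + 1) M, r k n
  have hrs : ∀ i j {s t : Finset ℕ}, s ⊆ Icc 1 M → t ⊆ Icc 1 M →
      Commute (∑ n ∈ s, r i n) (∑ n ∈ t, r j n) := fun i j s t hs ht =>
    Commute.sum_left _ _ _ fun p hp =>
      Commute.sum_right _ _ _ fun q hq => hrr i j p (hs hp) q (ht hq)
  have hls : ∀ k ∈ Icc 1 M, ∀ j {t : Finset ℕ}, t ⊆ (Icc 1 M).erase k →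
      Commute (l k) (∑ n ∈ t, r j n) := fun k hk j t ht =>
    Commute.sum_right _ _ _ fun n hn =>
      hlr k hk j n (mem_of_mem_erase (ht hn)) (ne_of_mem_erase (ht hn))
  have ha : ∀ {k}, k ≤ M → Ico 1 k ⊆ Icc 1 M := fun hk n hn => by
    simp only [mem_Ico, mem_Icc] at hn ⊢; omega
  have hb : ∀ k, Icc (k + 1) M ⊆ Icc 1 M := fun k n hn => by
    simp only [mem_Icc] at hn ⊢; omega
  calc ordProd (fun k => exp (l k + ∑ n ∈ (Icc 1 M).erase k, r k n)) m
      = ordProd (fun k => exp (a k) * exp (l k) * exp (b k)) m :=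
        ordProd_congr fun k hk₁ hkm => exp_add_sum_Icc_erase (hkm.trans hm) _ _ (hrr k k)
          fun n hn hnk => hlr k (by simp only [mem_Icc]; omega) k n hn hnk
    _ = ordProd (fun k => exp (a k)) m * ordProd (fun k => exp (l k)) m
          * ordProd (fun k => exp (b k)) m := by
        rw [ordProd_mul (f := fun k => exp (a k) * exp (l k)), ordProd_mul]
        · refine fun j k hj hjk hk => (hls k (by simp only [mem_Icc]; omega) j fun n hn => ?_).exp
          simp only [mem_Ico, mem_Icc, mem_erase] at hn ⊢; omega
        · refine fun j k hj hjk hk => (hrs k j (hb k) (ha (by omega))).exp.mul_right ?_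
          refine (hls j (by simp only [mem_Icc]; omega) k fun n hn => ?_).symm.exp
          simp only [mem_Icc, mem_erase] at hn ⊢; omega
    _ = _ := by
        rw [exp_sum_Icc_eq_ordProd a, exp_sum_Icc_eq_ordProd b]
        · exact fun j k _ _ hk => hrs _ _ (hb k) (hb j)
        · exact fun j k _ _ hk => hrs _ _ (ha (by omega)) (ha (by omega))

end BanachAlgebra

theorem ContinuousLinearMap.exp_apply_eq_self_of_apply_eq_zero {𝕜 E : Type*} [RCLike 𝕜]
    [NormedAddCommGroup E] [NormedSpace 𝕜 E] [CompleteSpace E] {A : E →L[𝕜] E} {ψ : E}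
    (h : A ψ = 0) : exp A ψ = ψ := by
  have hpow : ∀ n ≠ 0, ((n.factorial : 𝕜)⁻¹ • A ^ n) ψ = 0 := by
    rintro (_ | n) hn
    · contradiction
    · simp [pow_succ, h]
  rw [congrFun (exp_eq_tsum 𝕜) A, ← apply_apply (𝕜 := 𝕜),
    (apply 𝕜 E ψ).map_tsum (expSeries_summable' A)]
  simp only [apply_apply]
  rw [tsum_eq_single 0 hpow]
  simp

theorem repeated_interaction_propagator_decomposition_general
    {H : Type*} [NormedAddCommGroup H] [InnerProductSpace ℂ H] [CompleteSpace H]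
    (M : ℕ)
    (L R : ℕ → (H →L[ℂ] H)) (τ : ℕ → ℝ)
    (hRR : ∀ j ∈ Finset.Icc 1 M, ∀ k ∈ Finset.Icc 1 M, R j * R k = R k * R j)
    (hLR : ∀ k ∈ Finset.Icc 1 M, ∀ n ∈ Finset.Icc 1 M, n ≠ k → L k * R n = R n * L k)
    (Ltil : ℕ → (H →L[ℂ] H))
    (hLtil : ∀ k, Ltil k = L k + ∑ n ∈ (Finset.Icc 1 M).erase k, R n) :
    ∀ m, 1 ≤ m → m ≤ M →
      (ordProd (fun k => NormedSpace.exp ((-(Complex.I * (τ k : ℂ))) • Ltil k)) m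
        = NormedSpace.exp
            ((-(Complex.I)) • ∑ j ∈ Finset.Icc 1 m, ∑ k ∈ Finset.Ico 1 j, (τ j : ℂ) • R k)
          * ordProd (fun k => NormedSpace.exp ((-(Complex.I * (τ k : ℂ))) • L k)) m
          * NormedSpace.exp
            ((-(Complex.I)) • ∑ j ∈ Finset.Icc 1 m, ∑ k ∈ Finset.Icc (j+1) M, (τ j : ℂ) • R k))
      ∧ ∀ ψ : H, (∀ k ∈ Finset.Icc 1 M, R k ψ = 0) →
        (NormedSpace.exp
            ((-(Complex.I)) • ∑ j ∈ Finset.Icc 1 m, ∑ k ∈ Finset.Ico 1 j, (τ j : ℂ) • R k)) ψ = ψ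
        ∧ (NormedSpace.exp
            ((-(Complex.I)) • ∑ j ∈ Finset.Icc 1 m, ∑ k ∈ Finset.Icc (j+1) M, (τ j : ℂ) • R k)) ψ
          = ψ := by
  intro m _ hm
  let : NormedAlgebra ℚ (H →L[ℂ] H) := NormedAlgebra.restrictScalars ℚ ℂ _
  set r : ℕ → ℕ → H →L[ℂ] H := fun j k => (-(Complex.I * (τ j : ℂ))) • R k
  have hgen : ∀ k, (-(Complex.I * (τ k : ℂ))) • Ltil k
      = (-(Complex.I * (τ k : ℂ))) • L k + ∑ n ∈ (Icc 1 M).erase k, r k n := fun k => by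
    rw [hLtil, smul_add, smul_sum]
  have hsum : ∀ (t : ℕ → Finset ℕ), (-(Complex.I)) • ∑ j ∈ Icc 1 m, ∑ k ∈ t j, (τ j : ℂ) • R k
      = ∑ j ∈ Icc 1 m, ∑ k ∈ t j, r j k := fun t => by
    simp only [r, smul_sum, smul_smul, neg_mul]
  refine ⟨?_, fun ψ hψ => ⟨?_, ?_⟩⟩
  · simp only [hgen, hsum]
    refine ordProd_exp_add_sum_Icc_erase hm _ r (fun i j k hk n hn => ?_) fun k hk j n hn hnk => ?_
    · exact (Commute.smul_left (hRR k hk n hn) _).smul_right _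
    · exact (Commute.smul_left (hLR k hk n hn hnk) _).smul_right _
  all_goals
    refine ContinuousLinearMap.exp_apply_eq_self_of_apply_eq_zero ?_
    simp only [smul_apply, _root_.sum_apply]
    refine smul_eq_zero_of_right _ (sum_eq_zero fun j hj => sum_eq_zero fun k hk => ?_)
    rw [hψ k (by simp only [mem_Icc, mem_Ico] at hj hk ⊢; omega), smul_zero]

/-- Decomposition of the repeated-interaction propagator: splitting off the trivial
dynamics.  Here `L k` is the interacting Liouvillean at step `k`, `R k` the free
Liouvillean of the `k`-th chain element, and `Ltil k = L k + ∑_{n ≠ k} R n`. -/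
theorem repeated_interaction_propagator_decomposition
    {H : Type*} [NormedAddCommGroup H] [InnerProductSpace ℂ H] [CompleteSpace H]
    (M : ℕ) (hM : 1 ≤ M)
    (L R : ℕ → (H →L[ℂ] H)) (τ : ℕ → ℝ)
    (hRR : ∀ j ∈ Finset.Icc 1 M, ∀ k ∈ Finset.Icc 1 M, R j * R k = R k * R j)
    (hLR : ∀ k ∈ Finset.Icc 1 M, ∀ n ∈ Finset.Icc 1 M, n ≠ k → L k * R n = R n * L k)
    (Ltil : ℕ → (H →L[ℂ] H))
    (hLtil : ∀ k, Ltil k = L k + ∑ n ∈ (Finset.Icc 1 M).erase k, R n) :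
    ∀ m, 1 ≤ m → m ≤ M →
      (ordProd (fun k => NormedSpace.exp ((-(Complex.I * (τ k : ℂ))) • Ltil k)) m
        = NormedSpace.exp
            ((-(Complex.I)) • ∑ j ∈ Finset.Icc 1 m, ∑ k ∈ Finset.Ico 1 j, (τ j : ℂ) • R k)
          * ordProd (fun k => NormedSpace.exp ((-(Complex.I * (τ k : ℂ))) • L k)) m
          * NormedSpace.exp
            ((-(Complex.I)) • ∑ j ∈ Finset.Icc 1 m, ∑ k ∈ Finset.Icc (j+1) M, (τ j : ℂ) • R k))
      ∧ ∀ ψ : H, (∀ k ∈ Finset.Icc 1 M, R k ψ = 0) →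
        (NormedSpace.exp
            ((-(Complex.I)) • ∑ j ∈ Finset.Icc 1 m, ∑ k ∈ Finset.Ico 1 j, (τ j : ℂ) • R k)) ψ = ψ
        ∧ (NormedSpace.exp
            ((-(Complex.I)) • ∑ j ∈ Finset.Icc 1 m, ∑ k ∈ Finset.Icc (j+1) M, (τ j : ℂ) • R k)) ψ
          = ψ :=
  repeated_interaction_propagator_decomposition_general M L R τ hRR hLR Ltil hLtil
end

section
/- Let d ≥ 1, let ψ ∈ ℂ^d, and let M_1, …, M_n ∈ M_d(ℂ) satisfy M_j ψ = ψ for all j. Let ψ_1, …, ψ_n ∈ ℂ^d satisfy M_j* ψ_j = ψ_j and ⟨ψ_j, ψ⟩ = 1 for all j. Set P_j = |ψ⟩⟨ψ_j| (the rank-one operator x ↦ ⟨ψ_j, x⟩ ψ), Q_j = I − P_j, and M_{Q_j} = Q_j M_j Q_j. Then M_1 M_2 ⋯ M_n = |ψ⟩⟨θ_n| + M_{Q_1} M_{Q_2} ⋯ M_{Q_n}, where θ_n = M_n* ⋯ M_2* ψ_1 = ψ_n + M_{Q_n}* ψ_{n−1} + M_{Q_n}* M_{Q_{n−1}}* ψ_{n−2}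 + ⋯ + M_{Q_n}* ⋯ M_{Q_2}* ψ_1, and moreover ⟨θ_n, ψ⟩ = 1. -/
open scoped BigOperators Matrix

/-!
With `P_j = |ψ⟩⟨ψ_j|`, the hypotheses say `M_j P_j = P_j M_j = P_j² = P_j`, so
`M_{Q_j} = M_j - P_j`. Peeling off the first factor,
`M_1 (|ψ⟩⟨θ'| + B) = |ψ⟩⟨θ'| + (M_{Q_1} + |ψ⟩⟨ψ_1|) B` since `M_1 ψ = ψ`, which yields the
decomposition with `θ` given by the sum formula. Multiplying the decomposition on the left by
`⟨ψ_1|` annihilates `M_{Q_1} ⋯ M_{Q_n}` (as `⟨ψ_1| M_{Q_1} = 0`) and identifies the sum with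
`M_n* ⋯ M_2* ψ_1`. Finally `⟨θ, ψ⟩ = ⟨ψ_1, M_2 ⋯ M_n ψ⟩ = ⟨ψ_1, ψ⟩ = 1`.
-/

namespace Matrix

variable {R ι : Type*} [CommRing R] [Fintype ι]

theorem list_prod_mulVec_eq_self [DecidableEq ι] {ψ : ι → R} :
    ∀ {L : List (Matrix ι ι R)}, (∀ A ∈ L, A *ᵥ ψ = ψ) → L.prod *ᵥ ψ = ψ
  | [], _ => one_mulVec ψ
  | A :: L, h => by
    rw [List.forall_mem_cons] at h
    rw [List.prod_cons, ← mulVec_mulVec, list_prod_mulVec_eq_self h.2, h.1]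

theorem star_vecMul_eq_of_conjTranspose_mulVec_eq [StarRing R] {M : Matrix ι ι R} {v : ι → R}
    (hMv : Mᴴ *ᵥ v = v) : star v ᵥ* M = star v := by
  rw [← conjTranspose_conjTranspose M, ← star_mulVec, hMv]

variable [StarRing R] [DecidableEq ι]

theorem compress_eq_sub_vecMulVec {M : Matrix ι ι R} {ψ v : ι → R} (hMψ : M *ᵥ ψ = ψ)
    (hMv : Mᴴ *ᵥ v = v) (hvψ : star v ⬝ᵥ ψ = 1) :
    (1 - vecMulVec ψ (star v)) * M * (1 - vecMulVec ψ (star v)) = M - vecMulVec ψ (star v) := by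
  have hPM : vecMulVec ψ (star v) * M = vecMulVec ψ (star v) := by
    rw [vecMulVec_mul, star_vecMul_eq_of_conjTranspose_mulVec_eq hMv]
  have hMP : M * vecMulVec ψ (star v) = vecMulVec ψ (star v) := by
    rw [mul_vecMulVec, hMψ]
  have hPP : vecMulVec ψ (star v) * vecMulVec ψ (star v) = vecMulVec ψ (star v) := by
    rw [vecMulVec_mul_vecMulVec, hvψ, one_smul]
  simp only [sub_mul, mul_sub, one_mul, mul_one, hPM, hMP, hPP]
  abel

theorem prod_ofFn_eq_vecMulVec_add_prod {n : ℕ} {M B : Fin n → Matrix ι ι R} {ψ : ι → R}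
    {v : Fin n → ι → R} (hMψ : ∀ j, M j *ᵥ ψ = ψ)
    (hMB : ∀ j, M j = B j + vecMulVec ψ (star (v j))) :
    (List.ofFn M).prod =
      vecMulVec ψ (star (∑ i : Fin n, (((List.ofFn B).drop (i + 1)).prod)ᴴ *ᵥ v i))
        + (List.ofFn B).prod := by
  induction n with
  | zero => simp
  | succ n ih =>
    rw [List.ofFn_succ, List.prod_cons, ih (fun j => hMψ j.succ) (fun j => hMB j.succ),
      Fin.sum_univ_succ, mul_add, mul_vecMulVec, hMψ, hMB 0, add_mul, vecMulVec_mul,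
      List.ofFn_succ, List.prod_cons]
    simp only [Fin.val_zero, Fin.val_succ, zero_add, List.drop_succ_cons, List.drop_zero,
      star_add, star_mulVec, conjTranspose_conjTranspose, vecMulVec_add]
    abel

theorem conjTranspose_prod_tail_mulVec_eq_sum {n : ℕ} {M B : Fin (n + 1) → Matrix ι ι R}
    {ψ : ι → R} {v : Fin (n + 1) → ι → R} (hMψ : ∀ j, M j *ᵥ ψ = ψ)
    (hMB : ∀ j, M j = B j + vecMulVec ψ (star (v j))) (hMv : (M 0)ᴴ *ᵥ v 0 = v 0)
    (hvψ : star (v 0) ⬝ᵥ ψ = 1) :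
    (((List.ofFn M).drop 1).prod)ᴴ *ᵥ v 0
      = ∑ i : Fin (n + 1), (((List.ofFn B).drop (i + 1)).prod)ᴴ *ᵥ v i := by
  have hvM := star_vecMul_eq_of_conjTranspose_mulVec_eq hMv
  have hvB : star (v 0) ᵥ* B 0 = 0 := by
    rw [eq_sub_of_add_eq (hMB 0).symm, vecMul_sub, hvM, vecMul_vecMulVec, hvψ, one_smul, sub_self]
  have hleft := congrArg (star (v 0) ᵥ* ·) (prod_ofFn_eq_vecMulVec_add_prod hMψ hMB)
  rw [List.ofFn_succ, List.prod_cons, ← vecMul_vecMul, hvM, vecMul_add, vecMul_vecMulVec, hvψ,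
    one_smul, List.ofFn_succ, List.prod_cons, ← vecMul_vecMul, hvB, zero_vecMul, add_zero] at hleft
  apply star_injective
  rw [star_mulVec, conjTranspose_conjTranspose, List.ofFn_succ, List.drop_succ_cons,
    List.drop_zero, hleft, List.ofFn_succ]

theorem star_conjTranspose_prod_mulVec_dotProduct {L : List (Matrix ι ι R)} {ψ : ι → R}
    (hL : ∀ A ∈ L, A *ᵥ ψ = ψ) (v : ι → R) :
    star (L.prodᴴ *ᵥ v) ⬝ᵥ ψ = star v ⬝ᵥ ψ := by
  rw [star_mulVec, conjTranspose_conjTranspose, ← dotProduct_mulVec, list_prod_mulVec_eq_self hL]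

end Matrix

theorem product_decomposition_general
    {d n : ℕ} (hn : 1 ≤ n)
    (ψ : Fin d → ℂ)
    (M : Fin n → Matrix (Fin d) (Fin d) ℂ)
    (ψv : Fin n → (Fin d → ℂ))
    (hM : ∀ j, (M j).mulVec ψ = ψ)
    (hψv : ∀ j, (M j)ᴴ.mulVec (ψv j) = (ψv j))
    (hnorm : ∀ j, star (ψv j) ⬝ᵥ ψ = 1)
    (MQ : Fin n → Matrix (Fin d) (Fin d) ℂ)
    (hMQ : ∀ j, MQ j = (1 - Matrix.vecMulVec ψ (star (ψv j))) * M j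
        * (1 - Matrix.vecMulVec ψ (star (ψv j))))
    (θ : Fin d → ℂ)
    (hθ : θ = (((List.ofFn M).drop 1).prod)ᴴ.mulVec (ψv ⟨0, hn⟩)) :
    (List.ofFn M).prod = Matrix.vecMulVec ψ (star θ) + (List.ofFn MQ).prod
    ∧ θ = ∑ i : Fin n, (((List.ofFn MQ).drop (i + 1)).prod)ᴴ.mulVec (ψv i)
    ∧ star θ ⬝ᵥ ψ = 1 := by
  obtain ⟨m, rfl⟩ : ∃ m, n = m + 1 := ⟨n - 1, by omega⟩
  have hsplit : ∀ j, M j = MQ j + Matrix.vecMulVec ψ (star (ψv j)) := fun j => by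
    rw [hMQ, Matrix.compress_eq_sub_vecMulVec (hM j) (hψv j) (hnorm j), sub_add_cancel]
  have hθsum : θ = ∑ i : Fin (m + 1), (((List.ofFn MQ).drop (i + 1)).prod)ᴴ *ᵥ ψv i :=
    hθ.trans (Matrix.conjTranspose_prod_tail_mulVec_eq_sum hM hsplit (hψv 0) (hnorm 0))
  refine ⟨hθsum ▸ Matrix.prod_ofFn_eq_vecMulVec_add_prod hM hsplit, hθsum, ?_⟩
  rw [hθ, Matrix.star_conjTranspose_prod_mulVec_dotProduct _ (ψv _), hnorm]
  intro A hA
  obtain ⟨j, rfl⟩ := List.mem_ofFn.mp (List.mem_of_mem_drop hA)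
  exact hM j

/-- Decomposition of a product of matrices each fixing a common vector `ψ`:
`M_1 ⋯ M_n = |ψ⟩⟨θ_n| + M_{Q_1} ⋯ M_{Q_n}`, together with the two expressions for
`θ_n` and the normalization `⟨θ_n, ψ⟩ = 1`. -/
theorem product_decomposition
    {d n : ℕ} (hd : 1 ≤ d) (hn : 1 ≤ n)
    (ψ : Fin d → ℂ)
    (M : Fin n → Matrix (Fin d) (Fin d) ℂ)
    (ψv : Fin n → (Fin d → ℂ))
    (hM : ∀ j, (M j).mulVec ψ = ψ)
    (hψv : ∀ j, (M j)ᴴ.mulVec (ψv j) = (ψv j))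
    (hnorm : ∀ j, star (ψv j) ⬝ᵥ ψ = 1)
    (MQ : Fin n → Matrix (Fin d) (Fin d) ℂ)
    (hMQ : ∀ j, MQ j = (1 - Matrix.vecMulVec ψ (star (ψv j))) * M j
        * (1 - Matrix.vecMulVec ψ (star (ψv j))))
    (θ : Fin d → ℂ)
    (hθ : θ = (((List.ofFn M).drop 1).prod)ᴴ.mulVec (ψv ⟨0, hn⟩)) :
    (List.ofFn M).prod = Matrix.vecMulVec ψ (star θ) + (List.ofFn MQ).prod
    ∧ θ = ∑ i : Fin n, (((List.ofFn MQ).drop (i + 1)).prod)ᴴ.mulVec (ψv i)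
    ∧ star θ ⬝ᵥ ψ = 1 :=
  product_decomposition_general hn ψ M ψv hM hψv hnorm MQ hMQ θ hθ
end

section
/- Let d ≥ 1, let ν be a norm on ℂ^d and let ψ ∈ ℂ^d be a unit vector (Euclidean norm 1). Then there exists a constant C₀ > 0, depending only on d, ν and ψ, with the following properties. For any matrix M ∈ M_d(ℂ) with Mψ = ψ and ν(Mx) ≤ ν(x) for all x ∈ ℂ^d, one has the direct sum decomposition ℂ^d = ker(I − M) ⊕ ran(I − M); let P_{1,M} denote the projection onto ker(I − M) along ran(I − M), and set ψ_M = (P_{1,M})* ψ, Q_M = I − |ψ⟩⟨ψ_M| and M_Q = Q_M M Q_M. Then: (1) ‖ψ_M‖ ≤ C₀ (Euclidean norm) and ‖Q_M‖ ≤ 1 + C₀ (operator norm); (2) for any finite sequence M^{(1)}, …, M^{(n)} of matrices each satisfying the above two hypotheses, ‖M^{(n)}_Q M^{(n−1)}_Q ⋯ M^{(1)}_Q‖ ≤ C₀(1 + C₀); (3) for any such sequence, ‖(M^{(n)})* ⋯ (M^{(2)})* ψ_{M^{(1)}}‖ ≤ C₀². -/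
open scoped BigOperators Matrix

/-- The Euclidean norm of a vector in `ℂ^d`. -/
noncomputable def euclNorm {d : ℕ} (x : Fin d → ℂ) : ℝ :=
  ‖(WithLp.equiv 2 (Fin d → ℂ)).symm x‖

/-- The operator norm (w.r.t. the Euclidean norm) of a `d × d` complex matrix. -/
noncomputable def opNorm {d : ℕ} (A : Matrix (Fin d) (Fin d) ℂ) : ℝ :=
  ‖LinearMap.toContinuousLinearMap (Matrix.toEuclideanLin A)‖

/-- `A` is a reduced dynamics operator relative to `(ψ, ν)`: it fixes `ψ` and is a
contraction for the norm `ν`. -/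
def IsRDO {d : ℕ} (ν : (Fin d → ℂ) → ℝ) (ψ : Fin d → ℂ)
    (A : Matrix (Fin d) (Fin d) ℂ) : Prop :=
  A.mulVec ψ = ψ ∧ ∀ x, ν (A.mulVec x) ≤ ν x

/-- `P` is the projection onto `ker (I - A)` along `ran (I - A)`. -/
def ProjSpec {d : ℕ} (A P : Matrix (Fin d) (Fin d) ℂ) : Prop :=
  (∀ x, A.mulVec x = x → P.mulVec x = x) ∧ ∀ x, P.mulVec (x - A.mulVec x) = 0

/-! For a `ν`-contraction `M`, write `x = u + (y - M y)` with `M u = u`. The Cesàro sums give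
`N • u = ∑_{k<N} M^k x - (y - M^N y)`, hence `ν u ≤ ν x + 2 ν y / N` for all `N`, so `ν u ≤ ν x`.
This forces `ker (I - M) ∩ ran (I - M) = 0`, hence the direct sum, and shows that `P_{1,M}` is
again a `ν`-contraction. As all norms on `ℂ^d` are equivalent, every `ν`-contraction, in
particular `P_{1,M}` and every finite product of the `M^{(j)}`, has Euclidean operator norm at
most one constant `C`. Finally `Q_M` kills `ψ` while every `M` fixes it, so all inner factors
`Q_M` drop out: `M^{(n)}_Q ⋯ M^{(1)}_Q = Q_{M^{(n)}} M^{(n)} ⋯ M^{(1)}`. -/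

open scoped Matrix.Norms.L2Operator

theorem le_of_forall_natCast_mul_le_add {a b c : ℝ} (h : ∀ N : ℕ, N * a ≤ N * b + c) :
    a ≤ b := by
  by_contra! hba
  obtain ⟨N, hN⟩ := exists_nat_gt (c / (a - b))
  rw [div_lt_iff₀ (sub_pos.2 hba)] at hN
  nlinarith [h N]

namespace Seminorm

section Contractions

variable {𝕜 E : Type*} [RCLike 𝕜] [AddCommGroup E] [Module 𝕜 E] (p : Seminorm 𝕜 E)

def contractions : Submonoid (Module.End 𝕜 E) where
  carrier := {T | ∀ x, p (T x) ≤ p x}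
  one_mem' _ := le_rfl
  mul_mem' hS hT x := (hS _).trans (hT x)

variable {p}

theorem le_apply_add_sub_of_mem_contractions {T : Module.End 𝕜 E} (hT : T ∈ p.contractions)
    {u : E} (hu : T u = u) (y : E) : p u ≤ p (u + (y - T y)) := by
  set x := u + (y - T y)
  have hsum (N : ℕ) : ∑ k ∈ Finset.range N, (T ^ k) x = (N : 𝕜) • u + (y - (T ^ N) y) := by
    have hstep (k : ℕ) : (T ^ k) (T y) = (T ^ (k + 1)) y := by
      rw [pow_succ, Module.End.mul_apply]
    have hfix (k : ℕ) : (T ^ k) u = u := by rw [Module.End.pow_apply, Function.iterate_fixed hu]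
    simp only [x, map_add, map_sub, hstep, hfix, Finset.sum_add_distrib,
      Finset.sum_range_sub' (fun k => (T ^ k) y), Finset.sum_const, Finset.card_range, pow_zero,
      Module.End.one_apply, Nat.cast_smul_eq_nsmul]
  refine le_of_forall_natCast_mul_le_add (c := 2 * p y) fun N => ?_
  calc N * p u = p ((N : 𝕜) • u) := by rw [map_smul_eq_mul, RCLike.norm_natCast]
    _ = p (∑ k ∈ Finset.range N, (T ^ k) x - (y - (T ^ N) y)) := by
      rw [hsum, add_sub_cancel_right]
    _ ≤ ∑ k ∈ Finset.range N, p ((T ^ k) x) + (p y + p ((T ^ N) y)) :=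
      (map_sub_le_add p _ _).trans <| add_le_add
        (Finset.le_sum_of_subadditive p (map_zero p).le (map_add_le_add p) _ _)
        (map_sub_le_add p _ _)
    _ ≤ ∑ k ∈ Finset.range N, p x + (p y + p y) := by
      gcongr with k
      exacts [pow_mem hT k x, pow_mem hT N y]
    _ = N * p x + 2 * p y := by rw [Finset.sum_const, Finset.card_range, nsmul_eq_mul]; ring

theorem disjoint_ker_range_of_mem_contractions (hp : ∀ x, p x = 0 → x = 0)
    {T : Module.End 𝕜 E} (hT : T ∈ p.contractions) :
    Disjoint (LinearMap.ker (1 - T)) (LinearMap.range (1 - T)) := by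
  rw [Submodule.disjoint_def]
  rintro _ hx ⟨y, rfl⟩
  have hfix : T ((1 - T) y) = (1 - T) y := (sub_eq_zero.1 hx).symm
  refine hp _ (le_antisymm ?_ (apply_nonneg p _))
  simpa using le_apply_add_sub_of_mem_contractions hT hfix (-y)

variable [FiniteDimensional 𝕜 E]

theorem isCompl_ker_range_of_mem_contractions (hp : ∀ x, p x = 0 → x = 0)
    {T : Module.End 𝕜 E} (hT : T ∈ p.contractions) :
    IsCompl (LinearMap.ker (1 - T)) (LinearMap.range (1 - T)) :=
  (Submodule.isCompl_iff_disjoint _ _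
    (add_comm (Module.finrank 𝕜 (LinearMap.range (1 - T))) _ ▸
      (LinearMap.finrank_range_add_finrank_ker (1 - T)).ge)).2
    (disjoint_ker_range_of_mem_contractions hp hT)

theorem mem_contractions_of_isProj (hp : ∀ x, p x = 0 → x = 0)
    {T P : Module.End 𝕜 E} (hT : T ∈ p.contractions)
    (hP₁ : ∀ x, T x = x → P x = x) (hP₂ : ∀ x, P (x - T x) = 0) : P ∈ p.contractions := by
  intro x
  obtain ⟨u, hu, _, ⟨y, rfl⟩, rfl⟩ :=
    Submodule.mem_sup.1 ((isCompl_ker_range_of_mem_contractions hp hT).sup_eq_top ▸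
      Submodule.mem_top (x := x))
  have hTu : T u = u := (sub_eq_zero.1 hu).symm
  have hy : (1 - T) y = y - T y := rfl
  rw [hy, map_add, hP₁ u hTu, hP₂ y, add_zero]
  exact le_apply_add_sub_of_mem_contractions hT hTu y

end Contractions

section NormEquivalence

variable {E : Type*} [NormedAddCommGroup E] [NormedSpace ℂ E] [FiniteDimensional ℂ E]
  (p : Seminorm ℂ E)

theorem continuous_of_finiteDimensional : Continuous p :=
  continuousOn_univ.1 (p.convexOn.continuousOn isOpen_univ)

theorem exists_pos_mul_norm_le (hp : ∀ x, p x = 0 → x = 0) :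
    ∃ c > 0, ∀ x, c * ‖x‖ ≤ p x := by
  rcases subsingleton_or_nontrivial E with hE | hE
  · exact ⟨1, one_pos, fun x => by simp [Subsingleton.elim x 0]⟩
  obtain ⟨z, hz, hmin⟩ := (isCompact_sphere (0 : E) 1).exists_isMinOn
    (NormedSpace.sphere_nonempty.2 zero_le_one) p.continuous_of_finiteDimensional.continuousOn
  have hz0 : z ≠ 0 := ne_zero_of_mem_unit_sphere ⟨z, hz⟩
  refine ⟨p z, (apply_nonneg p z).lt_of_ne fun h => hz0 (hp z h.symm), fun x => ?_⟩
  rcases eq_or_ne x 0 with rfl | hx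
  · simp
  have hxs : ((‖x‖ : ℂ)⁻¹ • x) ∈ Metric.sphere (0 : E) 1 := by
    simpa using norm_smul_inv_norm (𝕜 := ℂ) hx
  have : p z ≤ p ((‖x‖ : ℂ)⁻¹ • x) := hmin hxs
  rw [map_smul_eq_mul, norm_inv, Complex.norm_real, norm_norm] at this
  rwa [le_inv_mul_iff₀ (norm_pos_iff.2 hx), mul_comm] at this

theorem exists_norm_apply_le_of_mem_contractions (hp : ∀ x, p x = 0 → x = 0) :
    ∃ C > 0, ∀ T ∈ p.contractions, ∀ x, ‖T x‖ ≤ C * ‖x‖ := by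
  obtain ⟨c, hc, hlow⟩ := p.exists_pos_mul_norm_le hp
  obtain ⟨C, hC, hup⟩ := bound_of_continuous_normedSpace p p.continuous_of_finiteDimensional
  refine ⟨C / c, div_pos hC hc, fun T hT x => ?_⟩
  rw [div_mul_eq_mul_div, le_div_iff₀' hc]
  exact (hlow (T x)).trans ((hT x).trans (hup x))

end NormEquivalence

end Seminorm

namespace Matrix

variable {n : Type*} [Fintype n]

section Algebra

variable {R : Type*} [CommRing R]

theorem mul_one_sub_vecMulVec_of_mulVec_eq_zero [DecidableEq n] {K : Matrix n n R}
    {ψ : n → R} (hK : K *ᵥ ψ = 0) (w : n → R) : K * (1 - vecMulVec ψ w) = K := by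
  rw [mul_sub, mul_one, mul_vecMulVec, hK, zero_vecMulVec, sub_zero]

theorem one_sub_vecMulVec_mulVec_self [DecidableEq n] {ψ w : n → R} (h : w ⬝ᵥ ψ = 1) :
    (1 - vecMulVec ψ w) *ᵥ ψ = 0 := by
  rw [sub_mulVec, one_mulVec, vecMulVec_mulVec, h, MulOpposite.op_one, one_smul, sub_self]

theorem list_prod_map_mul_mul_one_sub_vecMulVec [DecidableEq n] {ι : Type*} (ψ : n → R)
    (M : ι → Matrix n n R) (w : ι → n → R) (h : ∀ i, ((1 - vecMulVec ψ (w i)) * M i) *ᵥ ψ = 0)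
    (i : ι) (l : List ι) :
    ((i :: l).map fun j => (1 - vecMulVec ψ (w j)) * M j * (1 - vecMulVec ψ (w j))).prod =
      (1 - vecMulVec ψ (w i)) * ((i :: l).map M).prod := by
  induction l generalizing i with
  | nil => simp [mul_one_sub_vecMulVec_of_mulVec_eq_zero (h i)]
  | cons j l ih =>
    rw [List.map_cons, List.prod_cons, ih j, mul_one_sub_vecMulVec_of_mulVec_eq_zero (h i),
      ← mul_assoc, mul_one_sub_vecMulVec_of_mulVec_eq_zero (h i)]
    simp only [List.map_cons, List.prod_cons, mul_assoc]

theorem mulVecLin_one_sub [DecidableEq n] (A : Matrix n n R) :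
    (1 - A).mulVecLin = 1 - A.mulVecLin := by
  ext
  simp

theorem mulVecLin_list_prod_mem [DecidableEq n] {S : Submonoid (Module.End R (n → R))}
    (l : List (Matrix n n R)) (h : ∀ A ∈ l, A.mulVecLin ∈ S) : l.prod.mulVecLin ∈ S := by
  induction l with
  | nil =>
    rw [List.prod_nil, mulVecLin_one]
    exact S.one_mem
  | cons A l ih =>
    rw [List.prod_cons, mulVecLin_mul]
    exact S.mul_mem (h A List.mem_cons_self) (ih fun B hB => h B (List.mem_cons_of_mem A hB))

end Algebra

section L2OpNorm

variable {𝕜 : Type*} [RCLike 𝕜]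

theorem star_dotProduct_self_eq_one {ψ : n → 𝕜} (hψ : ‖WithLp.toLp 2 ψ‖ = 1) :
    star ψ ⬝ᵥ ψ = 1 := by
  rw [dotProduct_comm, ← EuclideanSpace.inner_toLp_toLp, inner_self_eq_norm_sq_to_K, hψ]
  norm_num

variable [DecidableEq n]

theorem l2_opNorm_one_le : ‖(1 : Matrix n n 𝕜)‖ ≤ 1 := by
  rw [cstar_norm_def, map_one]
  exact ContinuousLinearMap.norm_id_le

theorem l2_opNorm_vecMulVec_star (x y : n → 𝕜) :
    ‖vecMulVec x (star y)‖ = ‖WithLp.toLp 2 x‖ * ‖WithLp.toLp 2 y‖ := by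
  rw [← InnerProductSpace.symm_toEuclideanLin_rankOne (WithLp.toLp 2 x) (WithLp.toLp 2 y),
    l2_opNorm_def, LinearEquiv.trans_apply, LinearEquiv.apply_symm_apply]
  exact InnerProductSpace.norm_rankOne _ _

theorem l2_opNorm_one_sub_vecMulVec_star_le (x y : n → 𝕜) :
    ‖1 - vecMulVec x (star y)‖ ≤ 1 + ‖WithLp.toLp 2 x‖ * ‖WithLp.toLp 2 y‖ :=
  (norm_sub_le _ _).trans (add_le_add l2_opNorm_one_le (l2_opNorm_vecMulVec_star x y).le)

theorem norm_toLp_conjTranspose_mulVec_le (A : Matrix n n 𝕜) (x : n → 𝕜) :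
    ‖WithLp.toLp 2 (Aᴴ *ᵥ x)‖ ≤ ‖A‖ * ‖WithLp.toLp 2 x‖ :=
  l2_opNorm_conjTranspose A ▸ Aᴴ.l2_opNorm_mulVec (WithLp.toLp 2 x)

theorem l2_opNorm_list_prod_map_mul_mul_one_sub_vecMulVec_le {ι : Type*} (ψ : n → 𝕜)
    (M : ι → Matrix n n 𝕜) (w : ι → n → 𝕜) (h : ∀ i, ((1 - vecMulVec ψ (w i)) * M i) *ᵥ ψ = 0)
    {a b : ℝ} (ha : 1 ≤ a) (hQ : ∀ i, ‖1 - vecMulVec ψ (w i)‖ ≤ a)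
    (hM : ∀ l : List ι, ‖(l.map M).prod‖ ≤ b) (l : List ι) :
    ‖(l.map fun j => (1 - vecMulVec ψ (w j)) * M j * (1 - vecMulVec ψ (w j))).prod‖ ≤ a * b := by
  have hb : 0 ≤ b := (norm_nonneg _).trans (hM [])
  rcases l with _ | ⟨i, l⟩
  · exact (hM []).trans (le_mul_of_one_le_left hb ha)
  rw [list_prod_map_mul_mul_one_sub_vecMulVec ψ M w h]
  exact (norm_mul_le _ _).trans (mul_le_mul (hQ i) (hM _) (norm_nonneg _) (zero_le_one.trans ha))

theorem exists_l2_opNorm_le_of_mulVecLin_mem_contractions (p : Seminorm ℂ (n → ℂ))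
    (hp : ∀ x, p x = 0 → x = 0) :
    ∃ C > 0, ∀ A : Matrix n n ℂ, A.mulVecLin ∈ p.contractions → ‖A‖ ≤ C := by
  let e := WithLp.linearEquiv 2 ℂ (n → ℂ)
  obtain ⟨C, hC, hbound⟩ := (p.comp e.toLinearMap).exists_norm_apply_le_of_mem_contractions
    fun x hx => e.injective ((hp _ hx).trans e.map_zero.symm)
  exact ⟨C, hC, fun A hA => (toEuclideanCLM (n := n) (𝕜 := ℂ) A).opNorm_le_bound hC.le
    (hbound (toEuclideanLin A) fun x => hA x.ofLp)⟩

end L2OpNorm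

end Matrix

theorem euclNorm_eq {d : ℕ} (x : Fin d → ℂ) : euclNorm x = ‖WithLp.toLp 2 x‖ := rfl

theorem opNorm_eq {d : ℕ} (A : Matrix (Fin d) (Fin d) ℂ) : opNorm A = ‖A‖ := rfl

section ProjSpec

variable {d : ℕ} {A P : Matrix (Fin d) (Fin d) ℂ}

theorem ProjSpec.one_sub_vecMulVec_mul_mulVec_eq_zero (hP : ProjSpec A P) {ψ : Fin d → ℂ}
    (hAψ : A *ᵥ ψ = ψ) (hψ : star ψ ⬝ᵥ ψ = 1) :
    ((1 - Matrix.vecMulVec ψ (star (Pᴴ *ᵥ ψ))) * A) *ᵥ ψ = 0 := by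
  rw [← Matrix.mulVec_mulVec, hAψ, Matrix.one_sub_vecMulVec_mulVec_self]
  rwa [Matrix.star_mulVec, Matrix.conjTranspose_conjTranspose, ← Matrix.dotProduct_mulVec,
    hP.1 ψ hAψ]

theorem ProjSpec.mulVecLin_mem_contractions {p : Seminorm ℂ (Fin d → ℂ)}
    (hp : ∀ x, p x = 0 → x = 0) (hA : A.mulVecLin ∈ p.contractions) (hP : ProjSpec A P) :
    P.mulVecLin ∈ p.contractions :=
  Seminorm.mem_contractions_of_isProj hp hA hP.1 hP.2

end ProjSpec

theorem rdo_uniform_bounds_general {d : ℕ}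
    (ν : (Fin d → ℂ) → ℝ)
    (hν0 : ∀ x, ν x = 0 ↔ x = 0)
    (hνsmul : ∀ (c : ℂ) (x : Fin d → ℂ), ν (c • x) = ‖c‖ * ν x)
    (hνadd : ∀ x y : Fin d → ℂ, ν (x + y) ≤ ν x + ν y)
    (ψ : Fin d → ℂ) (hψ : euclNorm ψ = 1) :
    ∃ C₀ > 0,
      (∀ A : Matrix (Fin d) (Fin d) ℂ, IsRDO ν ψ A →
        IsCompl (LinearMap.ker (Matrix.mulVecLin (1 - A)))
            (LinearMap.range (Matrix.mulVecLin (1 - A)))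
        ∧ ∀ P : Matrix (Fin d) (Fin d) ℂ, ProjSpec A P →
            euclNorm (Pᴴ.mulVec ψ) ≤ C₀
            ∧ opNorm (1 - Matrix.vecMulVec ψ (star (Pᴴ.mulVec ψ))) ≤ 1 + C₀)
      ∧ (∀ (n : ℕ) (Ms Ps : Fin n → Matrix (Fin d) (Fin d) ℂ),
          (∀ j, IsRDO ν ψ (Ms j)) → (∀ j, ProjSpec (Ms j) (Ps j)) →
          opNorm ((List.ofFn fun j : Fin n =>
              (1 - Matrix.vecMulVec ψ (star ((Ps j)ᴴ.mulVec ψ))) * Ms j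
                * (1 - Matrix.vecMulVec ψ (star ((Ps j)ᴴ.mulVec ψ)))).reverse.prod)
            ≤ C₀ * (1 + C₀))
      ∧ (∀ (n : ℕ) (hn : 1 ≤ n) (Ms Ps : Fin n → Matrix (Fin d) (Fin d) ℂ),
          (∀ j, IsRDO ν ψ (Ms j)) → (∀ j, ProjSpec (Ms j) (Ps j)) →
          euclNorm ((((List.ofFn Ms).drop 1).prod)ᴴ.mulVec ((Ps ⟨0, hn⟩)ᴴ.mulVec ψ))
            ≤ C₀ ^ 2) := by
  simp only [opNorm_eq]
  let p : Seminorm ℂ (Fin d → ℂ) := Seminorm.of ν hνadd hνsmul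
  have hp (x) : p x = 0 → x = 0 := (hν0 x).1
  obtain ⟨C, hC, hbound⟩ := Matrix.exists_l2_opNorm_le_of_mulVecLin_mem_contractions p hp
  have hprod (l : List (Matrix (Fin d) (Fin d) ℂ)) (hl : ∀ A ∈ l, IsRDO ν ψ A) : ‖l.prod‖ ≤ C :=
    hbound _ (Matrix.mulVecLin_list_prod_mem l fun A hA => (hl A hA).2)
  have hψM {A P} (hA : IsRDO ν ψ A) (hP : ProjSpec A P) : euclNorm (Pᴴ *ᵥ ψ) ≤ C := by
    refine (Matrix.norm_toLp_conjTranspose_mulVec_le P ψ).trans ?_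
    rw [← euclNorm_eq, hψ, mul_one]
    exact hbound _ (hP.mulVecLin_mem_contractions hp hA.2)
  have hQ {A P} (hA : IsRDO ν ψ A) (hP : ProjSpec A P) :
      ‖1 - Matrix.vecMulVec ψ (star (Pᴴ *ᵥ ψ))‖ ≤ 1 + C := by
    refine (Matrix.l2_opNorm_one_sub_vecMulVec_star_le _ _).trans ?_
    rw [← euclNorm_eq, ← euclNorm_eq, hψ, one_mul]
    exact add_le_add_right (hψM hA hP) 1
  refine ⟨C, hC, fun A hA => ⟨?_, fun P hP => ⟨hψM hA hP, hQ hA hP⟩⟩,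
    fun n Ms Ps hMs hPs => ?_, fun n hn Ms Ps hMs hPs => ?_⟩
  · rw [Matrix.mulVecLin_one_sub]
    exact Seminorm.isCompl_ker_range_of_mem_contractions hp hA.2
  · rw [List.ofFn_eq_map, ← List.map_reverse, mul_comm]
    refine Matrix.l2_opNorm_list_prod_map_mul_mul_one_sub_vecMulVec_le ψ Ms _
      (fun j => (hPs j).one_sub_vecMulVec_mul_mulVec_eq_zero (hMs j).1
        (Matrix.star_dotProduct_self_eq_one hψ))
      (by linarith) (fun j => hQ (hMs j) (hPs j)) (fun l => hprod _ ?_) _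
    simp [hMs]
  · refine (Matrix.norm_toLp_conjTranspose_mulVec_le _ _).trans ?_
    rw [sq, ← euclNorm_eq]
    refine mul_le_mul (hprod _ fun A hA => ?_) (hψM (hMs _) (hPs _)) (norm_nonneg _) hC.le
    obtain ⟨j, rfl⟩ := List.mem_ofFn.1 (List.mem_of_mem_drop hA)
    exact hMs j

/-- Uniform bounds for reduced dynamics operators: existence of a constant `C₀`,
depending only on `d`, `ν` and `ψ`, bounding `ψ_M`, `Q_M` and all products of the
`M_Q`'s, together with the direct sum decomposition `ℂ^d = ker(I-M) ⊕ ran(I-M)`. -/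
theorem rdo_uniform_bounds {d : ℕ} (hd : 1 ≤ d)
    (ν : (Fin d → ℂ) → ℝ)
    (hν0 : ∀ x, ν x = 0 ↔ x = 0)
    (hνsmul : ∀ (c : ℂ) (x : Fin d → ℂ), ν (c • x) = ‖c‖ * ν x)
    (hνadd : ∀ x y : Fin d → ℂ, ν (x + y) ≤ ν x + ν y)
    (ψ : Fin d → ℂ) (hψ : euclNorm ψ = 1) :
    ∃ C₀ > 0,
      (∀ A : Matrix (Fin d) (Fin d) ℂ, IsRDO ν ψ A →
        IsCompl (LinearMap.ker (Matrix.mulVecLin (1 - A)))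
            (LinearMap.range (Matrix.mulVecLin (1 - A)))
        ∧ ∀ P : Matrix (Fin d) (Fin d) ℂ, ProjSpec A P →
            euclNorm (Pᴴ.mulVec ψ) ≤ C₀
            ∧ opNorm (1 - Matrix.vecMulVec ψ (star (Pᴴ.mulVec ψ))) ≤ 1 + C₀)
      ∧ (∀ (n : ℕ) (Ms Ps : Fin n → Matrix (Fin d) (Fin d) ℂ),
          (∀ j, IsRDO ν ψ (Ms j)) → (∀ j, ProjSpec (Ms j) (Ps j)) →
          opNorm ((List.ofFn fun j : Fin n =>
              (1 - Matrix.vecMulVec ψ (star ((Ps j)ᴴ.mulVec ψ))) * Ms j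
                * (1 - Matrix.vecMulVec ψ (star ((Ps j)ᴴ.mulVec ψ)))).reverse.prod)
            ≤ C₀ * (1 + C₀))
      ∧ (∀ (n : ℕ) (hn : 1 ≤ n) (Ms Ps : Fin n → Matrix (Fin d) (Fin d) ℂ),
          (∀ j, IsRDO ν ψ (Ms j)) → (∀ j, ProjSpec (Ms j) (Ps j)) →
          euclNorm ((((List.ofFn Ms).drop 1).prod)ᴴ.mulVec ((Ps ⟨0, hn⟩)ᴴ.mulVec ψ))
            ≤ C₀ ^ 2) :=
  rdo_uniform_bounds_general ν hν0 hνsmul hνadd ψ hψ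
end

section
/- The Hermitian matrix h_λ on ℂ² ⊗ ℂ² has eigenvalues E_{0+} = 0, E_{0−} = E_S + E_E, and E_{1±} = ((E_S + E_E) ± √((E_S − E_E)² + 4λ²))/2, with corresponding eigenvectors ψ_{0+} = |0⟩⊗|0⟩, ψ_{0−} = |1⟩⊗|1⟩, and ψ_{1±} = a_{1±} |1⟩⊗|0⟩ + b_{1±} |0⟩⊗|1⟩, where a_{1±} = −λ/√(λ² + (E_S − E_{1±})²) and b_{1±} = (E_S − E_{1±})/√(λ² + (E_S − E_{1±})²). That is, h_λ ψ_{0+} = 0, h_λ ψ_{0−} = (E_S + E_E) ψ_{0−}, h_λ ψ_{1±} = E_{1±} ψ_{1±}, and {ψ_{0+}, ψ_{0−}, ψ_{1+}, ψ_{1−}} is an orthonormal basis of ℂ² ⊗ ℂ². -/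
open Matrix
open scoped Kronecker Matrix

noncomputable section

/-- The Hamiltonian of the two-level system `S`. -/
def hamS (ES : ℝ) : Matrix (Fin 2) (Fin 2) ℂ := !![0, 0; 0, (ES : ℂ)]

/-- The Hamiltonian of the two-level system `E`. -/
def hamE (EE : ℝ) : Matrix (Fin 2) (Fin 2) ℂ := !![0, 0; 0, (EE : ℂ)]

/-- The annihilation operator `a` with `a|1⟩ = |0⟩`, `a|0⟩ = 0`. -/
def annOp : Matrix (Fin 2) (Fin 2) ℂ := !![0, 1; 0, 0]

/-- The coupled Hamiltonian `h_λ = h_S ⊗ 1 + 1 ⊗ h_E + λ (a ⊗ a* + a* ⊗ a)`. -/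
def hamLam (ES EE lam : ℝ) : Matrix (Fin 2 × Fin 2) (Fin 2 × Fin 2) ℂ :=
  hamS ES ⊗ₖ 1 + 1 ⊗ₖ hamE EE + (lam : ℂ) • (annOp ⊗ₖ annOpᴴ + annOpᴴ ⊗ₖ annOp)

/-- The product basis vector `|i⟩ ⊗ |j⟩` of `ℂ² ⊗ ℂ²`. -/
def ket2 (i j : Fin 2) : Fin 2 × Fin 2 → ℂ := fun p => if p = (i, j) then 1 else 0

/-!
`h_λ` conserves the number of excitations: it annihilates `|00⟩`, multiplies `|11⟩` by
`E_S + E_E`, and on `span {|10⟩, |01⟩}` acts as the real symmetric matrix `[[E_S, λ], [λ, E_E]]`.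
The vector `(-λ, E_S - E)` is an eigenvector of that matrix for the eigenvalue `E` exactly when
`(E_S - E)(E_E - E) = λ²`, the characteristic equation whose roots are `E_{1±}`. The roots satisfy
`(E_S - E_{1+})(E_S - E_{1-}) = -λ²`, which makes the two eigenvectors orthogonal, and `λ ≠ 0`
keeps their norms `√(λ² + (E_S - E)²)` away from zero.
-/

lemma isHermitian_diag_zero_ofReal (x : ℝ) : (!![0, 0; 0, (x : ℂ)]).IsHermitian := by
  ext i j
  fin_cases i <;> fin_cases j <;> simp

lemma Matrix.IsHermitian.kronecker {R m n : Type*} [CommMagma R] [StarMul R]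
    {A : Matrix m m R} {B : Matrix n n R}
    (hA : A.IsHermitian) (hB : B.IsHermitian) : (A ⊗ₖ B).IsHermitian := by
  rw [IsHermitian, conjTranspose_kronecker, hA.eq, hB.eq]

lemma hamLam_isHermitian (ES EE lam : ℝ) : (hamLam ES EE lam).IsHermitian := by
  have hcoupling : (annOp ⊗ₖ annOpᴴ + annOpᴴ ⊗ₖ annOp).IsHermitian := by
    simpa [conjTranspose_kronecker] using isHermitian_add_transpose_self (annOp ⊗ₖ annOpᴴ)
  exact (((isHermitian_diag_zero_ofReal ES).kronecker isHermitian_one).add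
    (isHermitian_one.kronecker (isHermitian_diag_zero_ofReal EE))).add
    (hcoupling.smul (Complex.conj_ofReal lam))

lemma ket2_eq_single (i j : Fin 2) : ket2 i j = Pi.single (i, j) 1 := by
  funext p
  simp [ket2, Pi.single_apply]

lemma star_ket2_dotProduct_ket2 (i j k l : Fin 2) :
    star (ket2 i j) ⬝ᵥ ket2 k l = if (i, j) = (k, l) then 1 else 0 := by
  simp [ket2_eq_single, Pi.single_apply, eq_comm]

lemma hamLam_mulVec_ket2_00 (ES EE lam : ℝ) : hamLam ES EE lam *ᵥ ket2 0 0 = 0 := by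
  funext p
  obtain ⟨i, j⟩ := p
  fin_cases i <;> fin_cases j <;> simp [hamLam, hamS, hamE, annOp, ket2_eq_single, mulVec_single]

lemma hamLam_mulVec_ket2_11 (ES EE lam : ℝ) :
    hamLam ES EE lam *ᵥ ket2 1 1 = ((ES + EE : ℝ) : ℂ) • ket2 1 1 := by
  funext p
  obtain ⟨i, j⟩ := p
  fin_cases i <;> fin_cases j <;> simp [hamLam, hamS, hamE, annOp, ket2_eq_single, mulVec_single]

lemma hamLam_mulVec_ket2_10 (ES EE lam : ℝ) :
    hamLam ES EE lam *ᵥ ket2 1 0 = (ES : ℂ) • ket2 1 0 + (lam : ℂ) • ket2 0 1 := by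
  funext p
  obtain ⟨i, j⟩ := p
  fin_cases i <;> fin_cases j <;> simp [hamLam, hamS, hamE, annOp, ket2_eq_single, mulVec_single]

lemma hamLam_mulVec_ket2_01 (ES EE lam : ℝ) :
    hamLam ES EE lam *ᵥ ket2 0 1 = (lam : ℂ) • ket2 1 0 + (EE : ℂ) • ket2 0 1 := by
  funext p
  obtain ⟨i, j⟩ := p
  fin_cases i <;> fin_cases j <;> simp [hamLam, hamS, hamE, annOp, ket2_eq_single, mulVec_single]

lemma hamLam_mulVec_ket2_10_add_ket2_01 (ES EE lam : ℝ) (a b : ℂ) :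
    hamLam ES EE lam *ᵥ (a • ket2 1 0 + b • ket2 0 1)
      = (ES * a + lam * b) • ket2 1 0 + (lam * a + EE * b) • ket2 0 1 := by
  rw [mulVec_add, mulVec_smul, mulVec_smul, hamLam_mulVec_ket2_10, hamLam_mulVec_ket2_01]
  module

lemma hamLam_mulVec_eigenvector (ES EE lam E N : ℝ) (hchar : (ES - E) * (EE - E) = lam ^ 2) :
    hamLam ES EE lam *ᵥ (((-lam / N : ℝ) : ℂ) • ket2 1 0 + (((ES - E) / N : ℝ) : ℂ) • ket2 0 1)
      = (E : ℂ) • (((-lam / N : ℝ) : ℂ) • ket2 1 0 + (((ES - E) / N : ℝ) : ℂ) • ket2 0 1) := by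
  have h10 : ES * (-lam / N) + lam * ((ES - E) / N) = E * (-lam / N) := by ring
  have h01 : lam * (-lam / N) + EE * ((ES - E) / N) = E * ((ES - E) / N) := by
    linear_combination hchar / N
  rw [hamLam_mulVec_ket2_10_add_ket2_01, smul_add, smul_smul, smul_smul]
  congr 2
  · exact_mod_cast h10
  · exact_mod_cast h01

lemma eigenvector_coeffs_normalized (ES lam E : ℝ) (hlam : lam ≠ 0) :
    (-lam / √(lam ^ 2 + (ES - E) ^ 2)) ^ 2 + ((ES - E) / √(lam ^ 2 + (ES - E) ^ 2)) ^ 2 = 1 := by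
  have hpos : 0 < lam ^ 2 + (ES - E) ^ 2 := by positivity
  rw [div_pow, div_pow, Real.sq_sqrt hpos.le]
  field_simp

lemma eigenvector_coeffs_orthogonal (ES lam E E' N N' : ℝ)
    (hcross : (ES - E) * (ES - E') = -lam ^ 2) :
    (-lam / N) * (-lam / N') + ((ES - E) / N) * ((ES - E') / N') = 0 := by
  rw [div_mul_div_comm, div_mul_div_comm, ← add_div, hcross]
  ring

lemma star_dotProduct_eigenbasis (a b c d : ℝ) (hab : a ^ 2 + b ^ 2 = 1)
    (hcd : c ^ 2 + d ^ 2 = 1) (hac : a * c + b * d = 0) (i j : Fin 4) :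
    star (![ket2 0 0, ket2 1 1, (a : ℂ) • ket2 1 0 + (b : ℂ) • ket2 0 1,
        (c : ℂ) • ket2 1 0 + (d : ℂ) • ket2 0 1] i)
      ⬝ᵥ ![ket2 0 0, ket2 1 1, (a : ℂ) • ket2 1 0 + (b : ℂ) • ket2 0 1,
        (c : ℂ) • ket2 1 0 + (d : ℂ) • ket2 0 1] j
      = if i = j then 1 else 0 := by
  have hca : c * a + d * b = 0 := by linear_combination hac
  fin_cases i <;> fin_cases j <;>
    simp [star_ket2_dotProduct_ket2, dotProduct_add, add_dotProduct, star_add, star_smul, ← sq]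
  exacts [mod_cast hab, mod_cast hca, mod_cast hac, mod_cast hcd]

lemma sub_mul_sub_eq_sq_of_discriminant (ES EE lam E : ℝ)
    (h : (2 * E - (ES + EE)) ^ 2 = (ES - EE) ^ 2 + 4 * lam ^ 2) :
    (ES - E) * (EE - E) = lam ^ 2 := by
  linear_combination h / 4

theorem hamLam_eigendecomposition_general
    (ES EE lam : ℝ) (hlam : lam ≠ 0)
    (ν₀ E1p E1m a1p a1m b1p b1m : ℝ)
    (hν₀ : ν₀ = Real.sqrt ((ES - EE) ^ 2 + 4 * lam ^ 2))
    (hE1p : E1p = ((ES + EE) + ν₀) / 2)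
    (hE1m : E1m = ((ES + EE) - ν₀) / 2)
    (ha1p : a1p = -lam / Real.sqrt (lam ^ 2 + (ES - E1p) ^ 2))
    (ha1m : a1m = -lam / Real.sqrt (lam ^ 2 + (ES - E1m) ^ 2))
    (hb1p : b1p = (ES - E1p) / Real.sqrt (lam ^ 2 + (ES - E1p) ^ 2))
    (hb1m : b1m = (ES - E1m) / Real.sqrt (lam ^ 2 + (ES - E1m) ^ 2))
    (ψ1p ψ1m : Fin 2 × Fin 2 → ℂ)
    (hψ1p : ψ1p = (a1p : ℂ) • ket2 1 0 + (b1p : ℂ) • ket2 0 1)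
    (hψ1m : ψ1m = (a1m : ℂ) • ket2 1 0 + (b1m : ℂ) • ket2 0 1) :
    (hamLam ES EE lam).IsHermitian
    ∧ (hamLam ES EE lam).mulVec (ket2 0 0) = 0
    ∧ (hamLam ES EE lam).mulVec (ket2 1 1) = ((ES + EE : ℝ) : ℂ) • ket2 1 1
    ∧ (hamLam ES EE lam).mulVec ψ1p = (E1p : ℂ) • ψ1p
    ∧ (hamLam ES EE lam).mulVec ψ1m = (E1m : ℂ) • ψ1m
    ∧ (∀ i j : Fin 4,
        star (![ket2 0 0, ket2 1 1, ψ1p, ψ1m] i) ⬝ᵥ ![ket2 0 0, ket2 1 1, ψ1p, ψ1m] j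
          = if i = j then 1 else 0) := by
  have hν₀sq : ν₀ ^ 2 = (ES - EE) ^ 2 + 4 * lam ^ 2 := by
    rw [hν₀, Real.sq_sqrt (by positivity)]
  have hcharp : (ES - E1p) * (EE - E1p) = lam ^ 2 :=
    sub_mul_sub_eq_sq_of_discriminant ES EE lam E1p (by rw [hE1p]; linear_combination hν₀sq)
  have hcharm : (ES - E1m) * (EE - E1m) = lam ^ 2 :=
    sub_mul_sub_eq_sq_of_discriminant ES EE lam E1m (by rw [hE1m]; linear_combination hν₀sq)
  have hcross : (ES - E1p) * (ES - E1m) = -lam ^ 2 := by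
    rw [hE1p, hE1m]; linear_combination -hν₀sq / 4
  have hnormp : a1p ^ 2 + b1p ^ 2 = 1 := by
    rw [ha1p, hb1p]; exact eigenvector_coeffs_normalized ES lam E1p hlam
  have hnormm : a1m ^ 2 + b1m ^ 2 = 1 := by
    rw [ha1m, hb1m]; exact eigenvector_coeffs_normalized ES lam E1m hlam
  have horth : a1p * a1m + b1p * b1m = 0 := by
    rw [ha1p, hb1p, ha1m, hb1m]; exact eigenvector_coeffs_orthogonal ES lam E1p E1m _ _ hcross
  refine ⟨hamLam_isHermitian ES EE lam, hamLam_mulVec_ket2_00 ES EE lam,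
    hamLam_mulVec_ket2_11 ES EE lam, ?_, ?_, ?_⟩
  · rw [hψ1p, ha1p, hb1p]; exact hamLam_mulVec_eigenvector ES EE lam E1p _ hcharp
  · rw [hψ1m, ha1m, hb1m]; exact hamLam_mulVec_eigenvector ES EE lam E1m _ hcharm
  · rw [hψ1p, hψ1m]
    exact star_dotProduct_eigenbasis a1p b1p a1m b1m hnormp hnormm horth

/-- Diagonalization of the spin-spin Hamiltonian `h_λ`: eigenvalues
`0`, `E_S + E_E`, `E_{1±}` with the explicit orthonormal eigenbasis. -/
theorem hamLam_eigendecomposition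
    (ES EE lam : ℝ) (hES : 0 < ES) (hEE : 0 < EE) (hlam : lam ≠ 0)
    (ν₀ E1p E1m a1p a1m b1p b1m : ℝ)
    (hν₀ : ν₀ = Real.sqrt ((ES - EE) ^ 2 + 4 * lam ^ 2))
    (hE1p : E1p = ((ES + EE) + ν₀) / 2)
    (hE1m : E1m = ((ES + EE) - ν₀) / 2)
    (ha1p : a1p = -lam / Real.sqrt (lam ^ 2 + (ES - E1p) ^ 2))
    (ha1m : a1m = -lam / Real.sqrt (lam ^ 2 + (ES - E1m) ^ 2))
    (hb1p : b1p = (ES - E1p) / Real.sqrt (lam ^ 2 + (ES - E1p) ^ 2))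
    (hb1m : b1m = (ES - E1m) / Real.sqrt (lam ^ 2 + (ES - E1m) ^ 2))
    (ψ1p ψ1m : Fin 2 × Fin 2 → ℂ)
    (hψ1p : ψ1p = (a1p : ℂ) • ket2 1 0 + (b1p : ℂ) • ket2 0 1)
    (hψ1m : ψ1m = (a1m : ℂ) • ket2 1 0 + (b1m : ℂ) • ket2 0 1) :
    (hamLam ES EE lam).IsHermitian
    ∧ (hamLam ES EE lam).mulVec (ket2 0 0) = 0
    ∧ (hamLam ES EE lam).mulVec (ket2 1 1) = ((ES + EE : ℝ) : ℂ) • ket2 1 1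
    ∧ (hamLam ES EE lam).mulVec ψ1p = (E1p : ℂ) • ψ1p
    ∧ (hamLam ES EE lam).mulVec ψ1m = (E1m : ℂ) • ψ1m
    ∧ (∀ i j : Fin 4,
        star (![ket2 0 0, ket2 1 1, ψ1p, ψ1m] i) ⬝ᵥ ![ket2 0 0, ket2 1 1, ψ1p, ψ1m] j
          = if i = j then 1 else 0) :=
  hamLam_eigendecomposition_general ES EE lam hlam ν₀ E1p E1m a1p a1m b1p b1m hν₀ hE1p hE1m ha1p
    ha1m hb1p hb1m ψ1p ψ1m hψ1p hψ1m
end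
end
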